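/- arXiv:2111.13659 — 4 statements merged into one kernel-verified Lean document; each statement's English description precedes it below -/
import Mathlib

section
/- For 1/2 < H < 1 and 0 ≤ s ≤ t, the covariance of the solution in time satisfies E[u(t,x)u(s,x)] = (H/4)·[ (1/(H(2H+1)))·(t^{2H+1} + s^{2H+1}) − (1/H)·t·(t−s)^{2H} + (2/(2H+1))·(t−s)^{2H+1} ], and in particular it does not depend on x. -/
open MeasureTheory intervalIntegral

/-!
Integrating out `y` replaces the two wave kernels by `min (t - u) (s - v) / 2`, after which `x` has
disappeared and the covariance is `H (2H - 1) / 2 · ∫₀ᵗ∫₀ˢ min (t - u) (s - v) k (u - v) dv du` with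
`k = |·|^(2H-2)`. Let `φ, Φ, Ψ` be the primitives of `k, φ, Φ` vanishing at `0`. Both remaining
integrals have explicit antiderivatives built from `φ, Φ, Ψ`, piecewise smooth with a corner where
the `min` switches branch, and for an even kernel they give `Ψ t + Ψ s - Ψ (t - s) - s Φ (t - s)`.
For `x ≥ 0`, `Φ x = x^(2H) / (2H (2H - 1))` and `Ψ x = x^(2H+1) / (2H (2H - 1) (2H + 1))`.
-/

open Set

/-- The fundamental solution of the one-dimensional wave equation. -/
noncomputable def G1 (t x : ℝ) : ℝ := if |x| < t then 1/2 else 0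

lemma G1_eq_indicator (c : ℝ) : G1 c = (Ioo (-c) c).indicator (fun _ => 1 / 2) := by
  ext z
  simp only [G1, indicator, mem_Ioo, ← abs_lt]

lemma integral_G1 {c : ℝ} (hc : 0 ≤ c) : ∫ z, G1 c z = c := by
  rw [G1_eq_indicator, integral_indicator_const _ measurableSet_Ioo, measureReal_def,
    Real.volume_Ioo, ENNReal.toReal_ofReal (by linarith), smul_eq_mul]
  ring

lemma G1_mul_G1 (a b z : ℝ) : G1 a z * G1 b z = G1 (min a b) z / 2 := by
  simp only [G1, lt_min_iff]
  split_ifs <;> simp_all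
  norm_num

lemma integral_G1_sub_mul_G1_sub {a b : ℝ} (ha : 0 ≤ a) (hb : 0 ≤ b) (x : ℝ) :
    ∫ y, G1 a (x - y) * G1 b (x - y) = min a b / 2 := by
  simp_rw [G1_mul_G1]
  rw [MeasureTheory.integral_div, integral_sub_left_eq_self (G1 (min a b)),
    integral_G1 (le_min ha hb)]

lemma integral_integral_integral_G1_mul_G1 (k : ℝ → ℝ) {s t : ℝ} (hs : 0 ≤ s) (ht : 0 ≤ t)
    (x : ℝ) :
    ∫ u in (0:ℝ)..t, ∫ v in (0:ℝ)..s, ∫ y, G1 (t - u) (x - y) * G1 (s - v) (x - y) * k (u - v)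
      = (∫ u in (0:ℝ)..t, ∫ v in (0:ℝ)..s, min (t - u) (s - v) * k (u - v)) / 2 := by
  rw [← intervalIntegral.integral_div]
  refine integral_congr fun u hu => ?_
  rw [← intervalIntegral.integral_div]
  refine integral_congr fun v hv => ?_
  rw [uIcc_of_le ht] at hu
  rw [uIcc_of_le hs] at hv
  rw [MeasureTheory.integral_mul_const,
    integral_G1_sub_mul_G1_sub (by linarith [hu.2]) (by linarith [hv.2])]
  ring

noncomputable def primitive (f : ℝ → ℝ) (x : ℝ) : ℝ := ∫ y in (0:ℝ)..x, f y

lemma primitive_zero (f : ℝ → ℝ) : primitive f 0 = 0 := integral_same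

lemma hasDerivAt_primitive {f : ℝ → ℝ} {U : Set ℝ} (hf : ∀ a b, IntervalIntegrable f volume a b)
    (hU : IsOpen U) (hfU : ContinuousOn f U) {x : ℝ} (hx : x ∈ U) :
    HasDerivAt (primitive f) (f x) x :=
  integral_hasDerivAt_right (hf 0 x) (hfU.stronglyMeasurableAtFilter hU x hx)
    (hfU.continuousAt (hU.mem_nhds hx))

lemma primitive_neg (f : ℝ → ℝ) (x : ℝ) : primitive f (-x) = -∫ y in (0:ℝ)..x, f (-y) := by
  rw [primitive, intervalIntegral.integral_comp_neg, neg_zero, integral_symm]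

lemma primitive_neg_of_even {f : ℝ → ℝ} (hf : ∀ x, f (-x) = f x) (x : ℝ) :
    primitive f (-x) = -primitive f x := by
  rw [primitive_neg]
  simp only [hf, primitive]

lemma primitive_neg_of_odd {f : ℝ → ℝ} (hf : ∀ x, f (-x) = -f x) (x : ℝ) :
    primitive f (-x) = primitive f x := by
  rw [primitive_neg]
  simp only [hf, intervalIntegral.integral_neg, neg_neg, primitive]

lemma primitive_eq_mul_rpow {f : ℝ → ℝ} {c r x : ℝ} (hr : 0 < r)
    (hf : ∀ y, 0 ≤ y → f y = c * y ^ (r - 1)) (hx : 0 ≤ x) :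
    primitive f x = c / r * x ^ r := by
  rw [primitive, integral_congr fun y hy => hf y (uIcc_of_le hx ▸ hy).1,
    intervalIntegral.integral_const_mul,
    integral_rpow (Or.inl (by linarith)), sub_add_cancel, Real.zero_rpow hr.ne']
  ring

section Kernel

variable {k : ℝ → ℝ}

theorem integral_min_mul_comp_sub_eq (hk : ∀ a b, IntervalIntegrable k volume a b)
    (hk_cont : ContinuousOn k {0}ᶜ) {s t u : ℝ} (hs : 0 ≤ s) (hut : u ≤ t) :
    ∫ v in (0:ℝ)..s, min (t - u) (s - v) * k (u - v)
      = primitive (primitive k) (u - s) + min (t - u) s * primitive k u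
        - primitive (primitive k) (min u (t - s)) := by
  set φ := primitive k
  set Φ := primitive φ
  have hφ_cont : Continuous φ := continuous_primitive hk 0
  have hφ : ∀ x ≠ 0, HasDerivAt φ (k x) x := fun x hx =>
    hasDerivAt_primitive hk isOpen_compl_singleton hk_cont hx
  have hΦ : ∀ x, HasDerivAt Φ (φ x) x := fun x => (hφ_cont.integral_hasStrictDerivAt 0 x).hasDerivAt
  have hΦ_cont : Continuous Φ := continuous_iff_continuousAt.2 fun x => (hΦ x).continuousAt
  have hint : IntervalIntegrable (fun v => min (t - u) (s - v) * k (u - v)) volume 0 s := by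
    refine IntervalIntegrable.continuousOn_mul ?_ (by fun_prop)
    simpa using (hk (u - 0) (u - s)).comp_sub_left u
  let P : ℝ → ℝ := fun v => Φ (min (u - v) (t - s)) - min (t - u) (s - v) * φ (u - v)
  rw [integral_eq_of_hasDerivAt_off_countable_of_le P _ hs
    ((countable_singleton u).insert (u - (t - s))) (by fun_prop) ?_ hint]
  · simp only [P, sub_self, sub_zero, min_eq_left (by linarith : u - s ≤ t - s),
      min_eq_right (by linarith : (0:ℝ) ≤ t - u)]
    ring
  rintro v ⟨-, hv⟩
  simp only [mem_insert_iff, mem_singleton_iff, not_or] at hv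
  have hk_uv : u - v ≠ 0 := sub_ne_zero.2 (Ne.symm hv.2)
  rcases lt_or_gt_of_ne hv.1 with hlt | hgt
  · have h : HasDerivAt (fun w => Φ (t - s) - (t - u) * φ (u - w))
        (min (t - u) (s - v) * k (u - v)) v := by
      rw [min_eq_left (by linarith)]
      exact (((hφ _ hk_uv).comp_const_sub u v).const_mul (t - u)).const_sub (Φ (t - s))
        |>.congr_deriv (by ring)
    refine h.congr_of_eventuallyEq ?_
    filter_upwards [Iio_mem_nhds hlt] with w hw
    simp only [P, min_eq_right (by linarith [mem_Iio.1 hw] : t - s ≤ u - w),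
      min_eq_left (by linarith [mem_Iio.1 hw] : t - u ≤ s - w)]
  · have h : HasDerivAt (fun w => Φ (u - w) - (s - w) * φ (u - w))
        (min (t - u) (s - v) * k (u - v)) v := by
      rw [min_eq_right (by linarith)]
      exact (((hΦ _).comp_const_sub u v).sub
        (((hasDerivAt_id' v).const_sub s).mul ((hφ _ hk_uv).comp_const_sub u v))).congr_deriv
        (by ring)
    refine h.congr_of_eventuallyEq ?_
    filter_upwards [Ioi_mem_nhds hgt] with w hw
    simp only [P, min_eq_left (by linarith [mem_Ioi.1 hw] : u - w ≤ t - s),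
      min_eq_right (by linarith [mem_Ioi.1 hw] : s - w ≤ t - u)]

theorem integral_primitive_comp_sub_add_min_mul {φ : ℝ → ℝ} (hφ : Continuous φ) {s t : ℝ}
    (hs : 0 ≤ s) (hst : s ≤ t) :
    ∫ u in (0:ℝ)..t, (primitive φ (u - s) + min (t - u) s * φ u - primitive φ (min u (t - s)))
      = primitive (primitive φ) t - primitive (primitive φ) (-s)
        - primitive (primitive φ) (t - s) - s * primitive φ (t - s) := by
  set Φ := primitive φ
  set Ψ := primitive Φ
  have hΦ : ∀ x, HasDerivAt Φ (φ x) x := fun x => (hφ.integral_hasStrictDerivAt 0 x).hasDerivAt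
  have hΦ_cont : Continuous Φ := continuous_iff_continuousAt.2 fun x => (hΦ x).continuousAt
  have hΨ : ∀ x, HasDerivAt Ψ (Φ x) x := fun x => (hΦ_cont.integral_hasStrictDerivAt 0 x).hasDerivAt
  have hΨ_cont : Continuous Ψ := continuous_iff_continuousAt.2 fun x => (hΨ x).continuousAt
  let Q : ℝ → ℝ := fun u => Ψ (u - s) + min (t - u) s * Φ u + Ψ (max u (t - s))
    - Ψ (min u (t - s)) - max (u - (t - s)) 0 * Φ (t - s)
  rw [integral_eq_of_hasDerivAt_off_countable_of_le Q _ (hs.trans hst)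
    (countable_singleton (t - s)) (by fun_prop) ?_
    (Continuous.intervalIntegrable (by fun_prop) _ _)]
  · simp only [Q, sub_self, sub_zero, zero_sub, sub_sub_cancel, min_eq_left hs,
      min_eq_right (by linarith : s ≤ t), max_eq_left (by linarith : t - s ≤ t),
      min_eq_right (by linarith : t - s ≤ t), max_eq_left hs,
      max_eq_right (by linarith : 0 ≤ t - s),
      min_eq_left (by linarith : 0 ≤ t - s), max_eq_right (by linarith : -(t - s) ≤ 0),
      Ψ, Φ, primitive_zero]
    ring
  rintro u ⟨-, hu⟩
  rcases lt_or_gt_of_ne (mem_singleton_iff.not.1 hu) with hlt | hgt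
  · have h : HasDerivAt (fun w => Ψ (w - s) + s * Φ w + Ψ (t - s) - Ψ w)
        (Φ (u - s) + min (t - u) s * φ u - Φ (min u (t - s))) u := by
      rw [min_eq_right (by linarith), min_eq_left hlt.le]
      exact (((((hΨ _).comp_sub_const u s).add ((hΦ u).const_mul s)).add_const _).sub
        (hΨ u)).congr_deriv (by ring)
    refine h.congr_of_eventuallyEq ?_
    filter_upwards [Iio_mem_nhds hlt] with w hw
    simp only [Q, min_eq_right (by linarith [mem_Iio.1 hw] : s ≤ t - w),
      max_eq_right (mem_Iio.1 hw).le, min_eq_left (mem_Iio.1 hw).le,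
      max_eq_right (by linarith [mem_Iio.1 hw] : w - (t - s) ≤ 0)]
    ring
  · have h : HasDerivAt (fun w => Ψ (w - s) + (t - w) * Φ w + Ψ w - Ψ (t - s)
        - (w - (t - s)) * Φ (t - s))
        (Φ (u - s) + min (t - u) s * φ u - Φ (min u (t - s))) u := by
      rw [min_eq_left (by linarith), min_eq_right hgt.le]
      have h₁ := ((hasDerivAt_id' u).const_sub t).mul (hΦ u)
      have h₂ := ((hasDerivAt_id' u).sub_const (t - s)).mul_const (Φ (t - s))
      exact (((((hΨ _).comp_sub_const u s).add h₁).add (hΨ u)).sub_const (Ψ (t - s))).sub h₂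
        |>.congr_deriv (by ring)
    refine h.congr_of_eventuallyEq ?_
    filter_upwards [Ioi_mem_nhds hgt] with w hw
    simp only [Q, min_eq_left (by linarith [mem_Ioi.1 hw] : t - w ≤ s),
      max_eq_left (mem_Ioi.1 hw).le, min_eq_right (mem_Ioi.1 hw).le,
      max_eq_left (by linarith [mem_Ioi.1 hw] : 0 ≤ w - (t - s))]

theorem integral_integral_min_mul_comp_sub_eq (hk : ∀ a b, IntervalIntegrable k volume a b)
    (hk_cont : ContinuousOn k {0}ᶜ) (hk_even : ∀ x, k (-x) = k x) {s t : ℝ} (hs : 0 ≤ s)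
    (hst : s ≤ t) :
    ∫ u in (0:ℝ)..t, ∫ v in (0:ℝ)..s, min (t - u) (s - v) * k (u - v)
      = primitive (primitive (primitive k)) t + primitive (primitive (primitive k)) s
        - primitive (primitive (primitive k)) (t - s) - s * primitive (primitive k) (t - s) := by
  rw [integral_congr fun u hu => integral_min_mul_comp_sub_eq hk hk_cont hs
      (uIcc_of_le (hs.trans hst) ▸ hu).2,
    integral_primitive_comp_sub_add_min_mul (φ := primitive k) (continuous_primitive hk 0) hs hst,
    primitive_neg_of_even (primitive_neg_of_odd (primitive_neg_of_even hk_even))]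
  ring

end Kernel

lemma intervalIntegrable_abs_rpow {r : ℝ} (hr : -1 < r) (a b : ℝ) :
    IntervalIntegrable (fun x => |x| ^ r) volume a b := by
  have h_pos : ∀ c, 0 ≤ c → IntervalIntegrable (fun x => |x| ^ r) volume 0 c := fun c hc =>
    (intervalIntegrable_rpow' hr).congr fun x hx => by
      rw [uIoc_of_le hc] at hx
      simp only [abs_of_pos hx.1]
  have h_zero : ∀ c, IntervalIntegrable (fun x => |x| ^ r) volume 0 c := by
    intro c
    rcases le_total 0 c with hc | hc
    · exact h_pos c hc
    · simpa using (h_pos (-c) (neg_nonneg.2 hc)).comp_sub_left 0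
  exact (h_zero a).symm.trans (h_zero b)

lemma continuousOn_abs_rpow (r : ℝ) : ContinuousOn (fun x : ℝ => |x| ^ r) {0}ᶜ := fun _ hx =>
  (continuous_abs.continuousAt.rpow_const
    (Or.inl (abs_ne_zero.2 (mem_compl_singleton_iff.1 hx)))).continuousWithinAt

section PowerKernel

variable {q x : ℝ}

lemma primitive_abs_rpow (hq : 1 < q) (hx : 0 ≤ x) :
    primitive (fun z => |z| ^ (q - 2)) x = x ^ (q - 1) / (q - 1) := by
  rw [primitive_eq_mul_rpow (c := 1) (r := q - 1) (by linarith) (fun z hz => by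
    rw [abs_of_nonneg hz, sub_sub, one_add_one_eq_two, one_mul]) hx]
  ring

lemma primitive_primitive_abs_rpow (hq : 1 < q) (hx : 0 ≤ x) :
    primitive (primitive fun z => |z| ^ (q - 2)) x = x ^ q / (q * (q - 1)) := by
  rw [primitive_eq_mul_rpow (c := 1 / (q - 1)) (r := q) (by linarith) (fun z hz => by
    rw [primitive_abs_rpow hq hz]; ring) hx]
  field_simp

lemma primitive_primitive_primitive_abs_rpow (hq : 1 < q) (hx : 0 ≤ x) :
    primitive (primitive (primitive fun z => |z| ^ (q - 2))) x
      = x ^ (q + 1) / (q * (q - 1) * (q + 1)) := by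
  rw [primitive_eq_mul_rpow (c := 1 / (q * (q - 1))) (r := q + 1) (by linarith) (fun z hz => by
    rw [primitive_primitive_abs_rpow hq hz, add_sub_cancel_right]; ring) hx]
  field_simp

end PowerKernel

theorem wave_time_covariance_general (H : ℝ) (hH1 : 1/2 < H)
    (cov : ℝ → ℝ → ℝ → ℝ)
    (hiso : ∀ t s x : ℝ, 0 ≤ s → s ≤ t →
      cov t s x = H * (2*H - 1) *
        ∫ u in (0:ℝ)..t, ∫ v in (0:ℝ)..s, ∫ y : ℝ,
          G1 (t - u) (x - y) * G1 (s - v) (x - y) * |u - v| ^ (2*H - 2)) :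
    ∀ t s x : ℝ, 0 ≤ s → s ≤ t →
      cov t s x = (H/4) * ((1/(H*(2*H+1))) * (t ^ (2*H+1) + s ^ (2*H+1))
          - (1/H) * t * (t - s) ^ (2*H) + (2/(2*H+1)) * (t - s) ^ (2*H+1))
      ∧ ∀ x' : ℝ, cov t s x = cov t s x' := by
  intro t s x hs hst
  set k : ℝ → ℝ := fun z => |z| ^ (2*H - 2)
  have hq : 1 < 2*H := by linarith
  have hd : 0 ≤ t - s := sub_nonneg.2 hst
  have hcov : ∀ x, cov t s x = H * (2*H - 1) * ((primitive (primitive (primitive k)) t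
      + primitive (primitive (primitive k)) s - primitive (primitive (primitive k)) (t - s)
      - s * primitive (primitive k) (t - s)) / 2) := fun x => by
    rw [hiso t s x hs hst, integral_integral_integral_G1_mul_G1 k hs (hs.trans hst),
      integral_integral_min_mul_comp_sub_eq (intervalIntegrable_abs_rpow (by linarith))
        (continuousOn_abs_rpow _) (fun z => by simp only [abs_neg]) hs hst]
  refine ⟨?_, fun x' => (hcov x).trans (hcov x').symm⟩
  rw [hcov, primitive_primitive_primitive_abs_rpow hq (hs.trans hst),
    primitive_primitive_primitive_abs_rpow hq hs, primitive_primitive_primitive_abs_rpow hq hd,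
    primitive_primitive_abs_rpow hq hd, Real.rpow_add_one' hd (by linarith)]
  have : H ≠ 0 := by linarith
  have : H * 2 - 1 ≠ 0 := by linarith
  field_simp
  ring

/-- For `1/2 < H < 1` and `0 ≤ s ≤ t`, if the covariance of the mild solution
satisfies the Wiener isometry formula
`cov t s x = H(2H−1) ∫₀ᵗ∫₀ˢ∫_ℝ G₁(t−u,x−y) G₁(s−v,x−y) |u−v|^{2H−2} dy dv du`,
then `cov t s x = (H/4)[(1/(H(2H+1)))(t^{2H+1}+s^{2H+1}) − (1/H) t (t−s)^{2H}
+ (2/(2H+1))(t−s)^{2H+1}]`, and in particular it does not depend on `x`. -/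
theorem wave_time_covariance (H : ℝ) (hH1 : 1/2 < H) (hH2 : H < 1)
    (cov : ℝ → ℝ → ℝ → ℝ)
    (hiso : ∀ t s x : ℝ, 0 ≤ s → s ≤ t →
      cov t s x = H * (2*H - 1) *
        ∫ u in (0:ℝ)..t, ∫ v in (0:ℝ)..s, ∫ y : ℝ,
          G1 (t - u) (x - y) * G1 (s - v) (x - y) * |u - v| ^ (2*H - 2)) :
    ∀ t s x : ℝ, 0 ≤ s → s ≤ t →
      cov t s x = (H/4) * ((1/(H*(2*H+1))) * (t ^ (2*H+1) + s ^ (2*H+1))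
          - (1/H) * t * (t - s) ^ (2*H) + (2/(2*H+1)) * (t - s) ^ (2*H+1))
      ∧ ∀ x' : ℝ, cov t s x = cov t s x' :=
  wave_time_covariance_general H hH1 cov hiso
end

section
/- Let a, b, c, d : ℤ → ℝ be finitely supported (or supported on {−N,…,N}). Then ∑_{i,j,k,l} a(i−j)b(j−k)c(k−l)d(l−i) over i,j,k,l ∈ {0,…,N−1} is bounded in absolute value by N·‖a‖_{4/3}·‖b‖_{4/3}·‖c‖_{4/3}·‖d‖_{4/3}, where ‖f‖_p = (∑_{k=−N}^{N} |f(k)|^p)^{1/p}. -/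
open Finset

noncomputable section

/-- The `ℓ^{4/3}` norm of `f : ℤ → ℝ` restricted to `{−N, …, N}`. -/
def lnorm43 (N : ℕ) (f : ℤ → ℝ) : ℝ :=
  (∑ k ∈ Finset.Icc (-(N:ℤ)) (N:ℤ), |f k| ^ ((4:ℝ)/3)) ^ ((3:ℝ)/4)

/-!
Bounding every term by its absolute value and summing over `j` and `l` first, the cyclic sum is
at most `∑_{i,k<N} (|a| ∗ |b|)(i - k) · (|c| ∗ |d|)(k - i)`, where all differences of indices in
`[0, N)` lie in `[-N, N]`. Each value of `i - k` occurs at most `N` times, so Cauchy–Schwarz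
bounds this by `N ‖|a| ∗ |b|‖₂ ‖|c| ∗ |d|‖₂`, and Young's inequality
`‖f ∗ g‖₂ ≤ ‖f‖_{4/3} ‖g‖_{4/3}` finishes. Young's inequality itself comes from splitting
`f g = (f g)^{2/3} (f g)^{1/3}` and applying Cauchy–Schwarz twice.
-/

lemma sum_comp_le_sum_of_injOn {ι κ : Type*} {s : Finset ι} {t : Finset κ} {e : ι → κ}
    {h : κ → ℝ} (he : Set.InjOn e s) (hst : ∀ x ∈ s, e x ∈ t) (h0 : ∀ y ∈ t, 0 ≤ h y) :
    ∑ x ∈ s, h (e x) ≤ ∑ y ∈ t, h y := by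
  classical
  rw [← sum_image he]
  exact sum_le_sum_of_subset_of_nonneg (image_subset_iff.2 hst) fun y hy _ => h0 y hy

lemma sqrt_rpow_four_thirds {x : ℝ} (hx : 0 ≤ x) : √(x ^ (4 / 3 : ℝ)) = x ^ (2 / 3 : ℝ) := by
  rw [Real.sqrt_eq_rpow, ← Real.rpow_mul hx]
  norm_num

lemma sqrt_rpow_four_thirds_mul_sqrt_rpow_two_thirds {x : ℝ} (hx : 0 ≤ x) :
    √(x ^ (4 / 3 : ℝ)) * √(x ^ (2 / 3 : ℝ)) = x := by
  rw [← Real.sqrt_mul (by positivity), ← Real.rpow_add' hx (by norm_num)]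
  norm_num [Real.sqrt_sq hx]

lemma sqrt_mul_sqrt_eq_rpow_three_fourths {x : ℝ} (hx : 0 ≤ x) : √(x * √x) = x ^ (3 / 4 : ℝ) := by
  rw [Real.sqrt_eq_rpow, Real.sqrt_eq_rpow, ← Real.rpow_one_add' hx (by norm_num),
    ← Real.rpow_mul hx]
  norm_num

section Convolution

variable {G : Type*} [AddCommGroup G] [DecidableEq G]

/-- The convolution of the restrictions of `f` and `g` to `s`. -/
def convOn (s : Finset G) (f g : G → ℝ) (u : G) : ℝ :=
  ∑ m ∈ s with u - m ∈ s, f m * g (u - m)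

lemma convOn_nonneg {s : Finset G} {f g : G → ℝ} (hf : 0 ≤ f) (hg : 0 ≤ g) (u : G) :
    0 ≤ convOn s f g u :=
  sum_nonneg fun m _ => mul_nonneg (hf m) (hg _)

lemma sum_filter_sub_mem_le (s t : Finset G) {g : G → ℝ} (hg : ∀ m ∈ s, 0 ≤ g m) (m : G) :
    ∑ u ∈ t with u - m ∈ s, g (u - m) ≤ ∑ v ∈ s, g v :=
  sum_comp_le_sum_of_injOn (fun _ _ _ _ => sub_left_inj.1) (fun _ hu => (mem_filter.1 hu).2) hg

lemma sq_convOn_le (s : Finset G) {f g : G → ℝ} (hf : 0 ≤ f) (hg : 0 ≤ g) (u : G) :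
    convOn s f g u ^ 2 ≤ convOn s (f · ^ (4 / 3 : ℝ)) (g · ^ (4 / 3 : ℝ)) u *
      (√(∑ m ∈ s, f m ^ (4 / 3 : ℝ)) * √(∑ m ∈ s, g m ^ (4 / 3 : ℝ))) := by
  set P := {m ∈ s | u - m ∈ s}
  have hfg : ∀ m, 0 ≤ f m * g (u - m) := fun m => mul_nonneg (hf m) (hg _)
  have hsplit : convOn s f g u ≤ √(∑ m ∈ P, (f m * g (u - m)) ^ (4 / 3 : ℝ)) *
      √(∑ m ∈ P, (f m * g (u - m)) ^ (2 / 3 : ℝ)) :=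
    le_of_eq_of_le (sum_congr rfl fun m _ =>
        (sqrt_rpow_four_thirds_mul_sqrt_rpow_two_thirds (hfg m)).symm)
      (Real.sum_sqrt_mul_sqrt_le P (fun m => Real.rpow_nonneg (hfg m) _)
        (fun m => Real.rpow_nonneg (hfg m) _))
  have hmixed : ∑ m ∈ P, (f m * g (u - m)) ^ (2 / 3 : ℝ) ≤
      √(∑ m ∈ s, f m ^ (4 / 3 : ℝ)) * √(∑ m ∈ s, g m ^ (4 / 3 : ℝ)) := calc
    _ = ∑ m ∈ P, √(f m ^ (4 / 3 : ℝ)) * √(g (u - m) ^ (4 / 3 : ℝ)) :=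
      sum_congr rfl fun m _ => by
        rw [Real.mul_rpow (hf m) (hg _), sqrt_rpow_four_thirds (hf m),
          sqrt_rpow_four_thirds (hg _)]
    _ ≤ √(∑ m ∈ P, f m ^ (4 / 3 : ℝ)) * √(∑ m ∈ P, g (u - m) ^ (4 / 3 : ℝ)) :=
        Real.sum_sqrt_mul_sqrt_le P (fun m => Real.rpow_nonneg (hf m) _)
          (fun m => Real.rpow_nonneg (hg _) _)
    _ ≤ _ := by
        gcongr
        · exact fun m _ _ => Real.rpow_nonneg (hf m) _
        · exact filter_subset _ s
        · exact sum_comp_le_sum_of_injOn (fun _ _ _ _ => sub_right_inj.1)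
            (fun _ hm => (mem_filter.1 hm).2) fun v _ => Real.rpow_nonneg (hg v) _
  have hconv : convOn s (f · ^ (4 / 3 : ℝ)) (g · ^ (4 / 3 : ℝ)) u =
      ∑ m ∈ P, (f m * g (u - m)) ^ (4 / 3 : ℝ) :=
    sum_congr rfl fun m _ => (Real.mul_rpow (hf m) (hg _)).symm
  calc convOn s f g u ^ 2
      ≤ (√(∑ m ∈ P, (f m * g (u - m)) ^ (4 / 3 : ℝ)) *
          √(∑ m ∈ P, (f m * g (u - m)) ^ (2 / 3 : ℝ))) ^ 2 :=
        pow_le_pow_left₀ (sum_nonneg fun m _ => hfg m) hsplit 2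
    _ = convOn s (f · ^ (4 / 3 : ℝ)) (g · ^ (4 / 3 : ℝ)) u *
          ∑ m ∈ P, (f m * g (u - m)) ^ (2 / 3 : ℝ) := by
        rw [mul_pow, Real.sq_sqrt (sum_nonneg fun m _ => Real.rpow_nonneg (hfg m) _),
          Real.sq_sqrt (sum_nonneg fun m _ => Real.rpow_nonneg (hfg m) _), hconv]
    _ ≤ _ := mul_le_mul_of_nonneg_left hmixed
        (hconv ▸ sum_nonneg fun m _ => Real.rpow_nonneg (hfg m) _)

lemma sum_convOn_le (s t : Finset G) {f g : G → ℝ} (hf : ∀ m ∈ s, 0 ≤ f m)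
    (hg : ∀ m ∈ s, 0 ≤ g m) :
    ∑ u ∈ t, convOn s f g u ≤ (∑ m ∈ s, f m) * ∑ m ∈ s, g m := by
  simp only [convOn, sum_filter]
  rw [sum_comm, sum_mul]
  refine sum_le_sum fun m hm => ?_
  rw [← sum_filter, ← mul_sum]
  exact mul_le_mul_of_nonneg_left (sum_filter_sub_mem_le s t hg m) (hf m hm)

/-- Young's convolution inequality `‖f ∗ g‖₂ ≤ ‖f‖_{4/3} ‖g‖_{4/3}`. -/
theorem sqrt_sum_sq_convOn_le (s t : Finset G) {f g : G → ℝ} (hf : 0 ≤ f) (hg : 0 ≤ g) :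
    √(∑ u ∈ t, convOn s f g u ^ 2) ≤
      (∑ m ∈ s, f m ^ (4 / 3 : ℝ)) ^ (3 / 4 : ℝ) * (∑ m ∈ s, g m ^ (4 / 3 : ℝ)) ^ (3 / 4 : ℝ) := by
  set A := ∑ m ∈ s, f m ^ (4 / 3 : ℝ)
  set B := ∑ m ∈ s, g m ^ (4 / 3 : ℝ)
  have hA : 0 ≤ A := sum_nonneg fun m _ => Real.rpow_nonneg (hf m) _
  have hB : 0 ≤ B := sum_nonneg fun m _ => Real.rpow_nonneg (hg m) _
  have hsq : ∑ u ∈ t, convOn s f g u ^ 2 ≤ A * √A * (B * √B) := calc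
    _ ≤ ∑ u ∈ t, convOn s (f · ^ (4 / 3 : ℝ)) (g · ^ (4 / 3 : ℝ)) u * (√A * √B) :=
        sum_le_sum fun u _ => sq_convOn_le s hf hg u
    _ = (∑ u ∈ t, convOn s (f · ^ (4 / 3 : ℝ)) (g · ^ (4 / 3 : ℝ)) u) * (√A * √B) :=
        (sum_mul ..).symm
    _ ≤ A * B * (√A * √B) := by
        gcongr
        exact sum_convOn_le s t (fun m _ => Real.rpow_nonneg (hf m) _)
          (fun m _ => Real.rpow_nonneg (hg m) _)
    _ = A * √A * (B * √B) := by ring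
  calc √(∑ u ∈ t, convOn s f g u ^ 2) ≤ √(A * √A * (B * √B)) := Real.sqrt_le_sqrt hsq
    _ = A ^ (3 / 4 : ℝ) * B ^ (3 / 4 : ℝ) := by
        rw [Real.sqrt_mul (by positivity), sqrt_mul_sqrt_eq_rpow_three_fourths hA,
          sqrt_mul_sqrt_eq_rpow_three_fourths hB]

end Convolution

lemma abs_sum_cyclic_le {ι : Type*} (s : Finset ι) (x y z w : ι → ι → ℝ) :
    |∑ i ∈ s, ∑ j ∈ s, ∑ k ∈ s, ∑ l ∈ s, x i j * y j k * z k l * w l i| ≤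
      ∑ i ∈ s, ∑ k ∈ s, (∑ j ∈ s, |x i j| * |y j k|) * ∑ l ∈ s, |z k l| * |w l i| := calc
  _ ≤ ∑ i ∈ s, ∑ j ∈ s, ∑ k ∈ s, ∑ l ∈ s, |x i j| * |y j k| * |z k l| * |w l i| := by
      refine (abs_sum_le_sum_abs _ _).trans (sum_le_sum fun i _ => ?_)
      refine (abs_sum_le_sum_abs _ _).trans (sum_le_sum fun j _ => ?_)
      refine (abs_sum_le_sum_abs _ _).trans (sum_le_sum fun k _ => ?_)
      refine (abs_sum_le_sum_abs _ _).trans (sum_le_sum fun l _ => ?_)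
      simp only [abs_mul, le_refl]
  _ = _ := by
      simp only [sum_mul_sum, mul_assoc]
      exact sum_congr rfl fun i _ => sum_comm

lemma sum_range_sub_le_sum_Icc {N i : ℕ} (hi : i < N) {H : ℤ → ℝ}
    (hH : ∀ u ∈ Icc (-(N : ℤ)) N, 0 ≤ H u) :
    ∑ k ∈ range N, H (i - k) ≤ ∑ u ∈ Icc (-(N : ℤ)) N, H u :=
  sum_comp_le_sum_of_injOn (fun _ _ _ _ h => by simpa using h)
    (fun k hk => by simp only [mem_range, mem_Icc] at hk ⊢; omega) hH

lemma sum_range_sum_range_sub_le (N : ℕ) {H : ℤ → ℝ} (hH : ∀ u ∈ Icc (-(N : ℤ)) N, 0 ≤ H u) :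
    ∑ i ∈ range N, ∑ k ∈ range N, H (i - k) ≤ N * ∑ u ∈ Icc (-(N : ℤ)) N, H u := calc
  _ ≤ ∑ _i ∈ range N, ∑ u ∈ Icc (-(N : ℤ)) N, H u :=
      sum_le_sum fun i hi => sum_range_sub_le_sum_Icc (mem_range.1 hi) hH
  _ = _ := by rw [sum_const, card_range, nsmul_eq_mul]

lemma sum_range_sum_range_mul_le (N : ℕ) (F G : ℤ → ℝ) :
    ∑ i ∈ range N, ∑ k ∈ range N, F (i - k) * G (k - i) ≤
      N * √(∑ u ∈ Icc (-(N : ℤ)) N, F u ^ 2) * √(∑ u ∈ Icc (-(N : ℤ)) N, G u ^ 2) := calc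
  _ = ∑ p ∈ range N ×ˢ range N, F (p.1 - p.2) * G (p.2 - p.1) := by rw [sum_product]
  _ ≤ √(∑ p ∈ range N ×ˢ range N, F (p.1 - p.2) ^ 2) *
        √(∑ p ∈ range N ×ˢ range N, G (p.2 - p.1) ^ 2) := Real.sum_mul_le_sqrt_mul_sqrt _ _ _
  _ ≤ √(N * ∑ u ∈ Icc (-(N : ℤ)) N, F u ^ 2) * √(N * ∑ u ∈ Icc (-(N : ℤ)) N, G u ^ 2) := by
      rw [sum_product, sum_product]
      gcongr
      · exact sum_range_sum_range_sub_le N (H := (F · ^ 2)) fun u _ => sq_nonneg _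
      · rw [sum_comm]
        exact sum_range_sum_range_sub_le N (H := (G · ^ 2)) fun u _ => sq_nonneg _
  _ = _ := by
      rw [Real.sqrt_mul (by positivity), Real.sqrt_mul (by positivity), mul_mul_mul_comm,
        Real.mul_self_sqrt (by positivity), mul_assoc]

lemma sum_range_mul_le_convOn {N i k : ℕ} (hi : i < N) (hk : k < N) (a b : ℤ → ℝ) :
    ∑ j ∈ range N, |a (i - j)| * |b (j - k)| ≤
      convOn (Icc (-(N : ℤ)) N) (|a ·|) (|b ·|) (i - k) := calc
  _ = ∑ j ∈ range N, |a (i - j)| * |b ((i - k) - (i - j))| := by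
      simp only [sub_sub_sub_cancel_left]
  _ ≤ _ := sum_comp_le_sum_of_injOn (e := fun j : ℕ => (i : ℤ) - j)
      (h := fun m => |a m| * |b ((i - k : ℤ) - m)|) (fun _ _ _ _ h => by simpa using h)
      (fun j hj => by simp only [mem_range, mem_filter, mem_Icc] at hj ⊢; omega)
      fun _ _ => by positivity

/-- discrete Young/Hölder inequality for the fourfold cyclic convolution sum:
`|∑_{i,j,k,l<N} a(i−j) b(j−k) c(k−l) d(l−i)| ≤ N ‖a‖_{4/3} ‖b‖_{4/3} ‖c‖_{4/3} ‖d‖_{4/3}`,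
with the `ℓ^{4/3}` norms taken over `{−N,…,N}`. -/
theorem cyclic_convolution_bound (N : ℕ) (a b c d : ℤ → ℝ) :
    |∑ i ∈ Finset.range N, ∑ j ∈ Finset.range N, ∑ k ∈ Finset.range N, ∑ l ∈ Finset.range N,
        a ((i:ℤ) - (j:ℤ)) * b ((j:ℤ) - (k:ℤ)) * c ((k:ℤ) - (l:ℤ)) * d ((l:ℤ) - (i:ℤ))|
      ≤ (N:ℝ) * lnorm43 N a * lnorm43 N b * lnorm43 N c * lnorm43 N d := by
  set I := Icc (-(N : ℤ)) N
  have habs (f : ℤ → ℝ) : 0 ≤ (|f ·|) := fun _ => abs_nonneg _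
  calc _ ≤ ∑ i ∈ range N, ∑ k ∈ range N, (∑ j ∈ range N, |a (i - j)| * |b (j - k)|) *
          ∑ l ∈ range N, |c (k - l)| * |d (l - i)| :=
        abs_sum_cyclic_le (range N) (fun i j => a (i - j)) (fun j k => b (j - k))
          (fun k l => c (k - l)) (fun l i => d (l - i))
    _ ≤ ∑ i ∈ range N, ∑ k ∈ range N,
          convOn I (|a ·|) (|b ·|) (i - k) * convOn I (|c ·|) (|d ·|) (k - i) := by
        gcongr with i hi k hk
        · exact convOn_nonneg (habs a) (habs b) _
        · exact sum_range_mul_le_convOn (mem_range.1 hi) (mem_range.1 hk) a b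
        · exact sum_range_mul_le_convOn (mem_range.1 hk) (mem_range.1 hi) c d
    _ ≤ N * √(∑ u ∈ I, convOn I (|a ·|) (|b ·|) u ^ 2) *
          √(∑ u ∈ I, convOn I (|c ·|) (|d ·|) u ^ 2) := sum_range_sum_range_mul_le N _ _
    _ ≤ N * (lnorm43 N a * lnorm43 N b) * (lnorm43 N c * lnorm43 N d) := by
        gcongr
        · unfold lnorm43
          positivity
        · exact sqrt_sum_sq_convOn_le I I (habs a) (habs b)
        · exact sqrt_sum_sq_convOn_le I I (habs c) (habs d)
    _ = _ := by ring

end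
end

section
/- For 3/4 < H < 1 and m ≥ 2, the integral ∫_{[0,1]^m} |x₁−x₂|^{2H−2} min(x₁,x₂) · |x₂−x₃|^{2H−2} min(x₂,x₃) ⋯ |x_m−x₁|^{2H−2} min(x_m,x₁) dx₁⋯dx_m is finite. -/
/-!
With `γ = 2H - 2 ∈ (-1/2, 0)` and `0 ≤ min (x i) (x (i+1)) ≤ 1` on the cube, it suffices to
integrate the cyclic product `∏ aᵢ` of the kernels `aᵢ = |xᵢ - xᵢ₊₁|^γ`. Breaking two adjacent
edges by AM-GM, `a_k a_{k+1} ≤ a_k² + a_{k+1}²`, bounds it by two products along Hamiltonian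
paths, in each of which one kernel carries the exponent `2γ > -1`. A path product is integrated
out one endpoint at a time, and each step costs at most `sup_c ∫₀¹ |c - y|^β dy`, which is finite
for `-1 < β ≤ 0`.
-/

open MeasureTheory Set Function
open scoped ENNReal

section PathIntegral

variable {α : Type*} [MeasurableSpace α] (μ : Measure α) [IsProbabilityMeasure μ]

theorem measurable_prod_path {n : ℕ} {f : Fin n → α → α → ℝ≥0∞}
    (hf : ∀ i, Measurable (uncurry (f i))) :
    Measurable fun x : Fin (n + 1) → α => ∏ i, f i (x i.castSucc) (x i.succ) :=
  Finset.measurable_prod _ fun i _ =>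
    (hf i).comp (f := fun x : Fin (n + 1) → α => (x i.castSucc, x i.succ)) (by fun_prop)

theorem lintegral_prod_path_le {n : ℕ} (f : Fin n → α → α → ℝ≥0∞) (D : Fin n → ℝ≥0∞)
    (hf : ∀ i, Measurable (uncurry (f i))) (hD : ∀ i c, ∫⁻ y, f i c y ∂μ ≤ D i) :
    ∫⁻ x : Fin (n + 1) → α, ∏ i, f i (x i.castSucc) (x i.succ) ∂(Measure.pi fun _ => μ)
      ≤ ∏ i, D i := by
  induction n with
  | zero => simp
  | succ n ih =>
    set e := MeasurableEquiv.piFinSuccAbove (fun _ => α) (Fin.last (n + 1))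
    have hmp : MeasurePreserving e.symm (μ.prod (Measure.pi fun _ => μ)) (Measure.pi fun _ => μ) :=
      (measurePreserving_piFinSuccAbove (fun _ => μ) (Fin.last (n + 1))).symm
    rw [← hmp.lintegral_comp_emb e.symm.measurableEmbedding]
    have hsplit (y : α) (z : Fin (n + 1) → α) :
        ∏ i, f i (e.symm (y, z) i.castSucc) (e.symm (y, z) i.succ)
          = (∏ i : Fin n, f i.castSucc (z i.castSucc) (z i.succ))
            * f (Fin.last n) (z (Fin.last n)) y := by
      simp [e, Fin.prod_univ_castSucc, Fin.succ_castSucc, -Fin.castSucc_succ]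
    rw [lintegral_prod_symm]
    · simp_rw [hsplit]
      calc ∫⁻ z, ∫⁻ y, (∏ i : Fin n, f i.castSucc (z i.castSucc) (z i.succ))
              * f (Fin.last n) (z (Fin.last n)) y ∂μ ∂(Measure.pi fun _ => μ)
          ≤ ∫⁻ z, (∏ i : Fin n, f i.castSucc (z i.castSucc) (z i.succ)) * D (Fin.last n)
              ∂(Measure.pi fun _ => μ) := by
            refine lintegral_mono fun z => ?_
            rw [lintegral_const_mul _ (hf _).of_uncurry_left]
            exact mul_le_mul_right (hD _ _) _
        _ ≤ (∏ i : Fin n, D i.castSucc) * D (Fin.last n) := by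
            rw [lintegral_mul_const _ (measurable_prod_path fun i => hf i.castSucc)]
            exact mul_le_mul_left (ih _ _ (fun i => hf i.castSucc) fun i => hD i.castSucc) _
        _ = ∏ i, D i := (Fin.prod_univ_castSucc D).symm
    exact ((measurable_prod_path hf).comp e.symm.measurable).aemeasurable

theorem lintegral_prod_path_le_of_equiv {n : ℕ} {ι : Type*} [Fintype ι] (e : Fin (n + 1) ≃ ι)
    (f : Fin n → α → α → ℝ≥0∞) (D : Fin n → ℝ≥0∞)
    (hf : ∀ i, Measurable (uncurry (f i))) (hD : ∀ i c, ∫⁻ y, f i c y ∂μ ≤ D i) :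
    ∫⁻ x : ι → α, ∏ i, f i (x (e i.castSucc)) (x (e i.succ)) ∂(Measure.pi fun _ => μ)
      ≤ ∏ i, D i := by
  rw [← (measurePreserving_piCongrLeft (fun _ : ι => μ) e).lintegral_comp_emb
    (MeasurableEquiv.measurableEmbedding _)]
  simpa [MeasurableEquiv.coe_piCongrLeft, Equiv.piCongrLeft_apply_apply]
    using lintegral_prod_path_le μ f D hf hD

end PathIntegral

noncomputable def rieszKernel (γ c y : ℝ) : ℝ≥0∞ := ENNReal.ofReal (|c - y| ^ γ)

theorem measurable_uncurry_rieszKernel (γ : ℝ) : Measurable (uncurry (rieszKernel γ)) := by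
  unfold rieszKernel; fun_prop

theorem rieszKernel_sq (γ c y : ℝ) : rieszKernel γ c y ^ 2 = rieszKernel (2 * γ) c y := by
  rw [rieszKernel, rieszKernel, ← ENNReal.ofReal_pow (by positivity), mul_comm,
    ← Real.rpow_mul_natCast (abs_nonneg _)]
  norm_num

theorem rieszKernel_le_indicator_add_one {γ : ℝ} (hγ : γ ≤ 0) (c y : ℝ) :
    rieszKernel γ c y ≤ (Metric.ball 0 1).indicator (rieszKernel γ 0) (y - c) + 1 := by
  by_cases h : y - c ∈ Metric.ball 0 1
  · rw [indicator_of_mem h, rieszKernel, rieszKernel, zero_sub, abs_neg, abs_sub_comm]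
    exact le_self_add
  · refine le_add_left (ENNReal.ofReal_le_one.2 (Real.rpow_le_one_of_one_le_of_nonpos ?_ hγ))
    simpa [abs_sub_comm, Real.dist_eq] using h

theorem lintegral_ball_rieszKernel_lt_top {γ : ℝ} (hγ : -1 < γ) :
    ∫⁻ t in Metric.ball (0 : ℝ) 1, rieszKernel γ 0 t < ⊤ := by
  have : IntegrableOn (fun t : ℝ => |t| ^ γ) (Metric.ball 0 1) :=
    integrableOn_ball_of_norm_le_rpow (C := 1) (α := -γ) (by simp) (by simp; linarith)
      (ae_of_all _ fun t => by simp [abs_of_nonneg (Real.rpow_nonneg (abs_nonneg t) γ)])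
      (continuous_abs.measurable.pow_const γ).aestronglyMeasurable
  simpa [rieszKernel] using this.lintegral_lt_top

theorem setLIntegral_rieszKernel_le {γ : ℝ} (hγ : γ ≤ 0) (s : Set ℝ) (c : ℝ) :
    ∫⁻ y in s, rieszKernel γ c y
      ≤ (∫⁻ t in Metric.ball (0 : ℝ) 1, rieszKernel γ 0 t) + volume s :=
  calc ∫⁻ y in s, rieszKernel γ c y
      ≤ ∫⁻ y in s, ((Metric.ball 0 1).indicator (rieszKernel γ 0) (y - c) + 1) :=
        lintegral_mono fun y => rieszKernel_le_indicator_add_one hγ c y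
    _ = (∫⁻ y in s, (Metric.ball 0 1).indicator (rieszKernel γ 0) (y - c)) + volume s := by
        rw [lintegral_add_right _ measurable_const, setLIntegral_const, one_mul]
    _ ≤ (∫⁻ y, (Metric.ball 0 1).indicator (rieszKernel γ 0) (y - c)) + volume s := by
        gcongr; exact Measure.restrict_le_self
    _ = (∫⁻ t in Metric.ball (0 : ℝ) 1, rieszKernel γ 0 t) + volume s := by
        rw [lintegral_sub_right_eq_self, lintegral_indicator measurableSet_ball]

theorem lintegral_prod_rieszKernel_path_lt_top {n : ℕ} {ι : Type*} [Fintype ι]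
    (e : Fin (n + 1) ≃ ι) {γ : Fin n → ℝ} (hγ : ∀ i, γ i ∈ Ioc (-1) 0) :
    ∫⁻ x : ι → ℝ, ∏ i, rieszKernel (γ i) (x (e i.castSucc)) (x (e i.succ))
      ∂(Measure.pi fun _ => volume.restrict (Icc (0 : ℝ) 1)) < ⊤ := by
  have : IsProbabilityMeasure (volume.restrict (Icc (0 : ℝ) 1)) := ⟨by simp⟩
  refine (lintegral_prod_path_le_of_equiv _ e _
    (fun i => (∫⁻ t in Metric.ball (0 : ℝ) 1, rieszKernel (γ i) 0 t) + 1)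
    (fun i => measurable_uncurry_rieszKernel _) fun i c => ?_).trans_lt ?_
  · simpa using setLIntegral_rieszKernel_le (hγ i).2 (Icc 0 1) c
  · exact ENNReal.prod_lt_top fun i _ =>
      ENNReal.add_lt_top.2 ⟨lintegral_ball_rieszKernel_lt_top (hγ i).1, ENNReal.one_lt_top⟩

theorem ENNReal.mul_le_sq_add_sq (a b : ℝ≥0∞) : a * b ≤ a ^ 2 + b ^ 2 := by
  rcases le_total a b with h | h
  · exact (mul_le_mul_left h b).trans (sq b ▸ le_add_self)
  · exact (mul_le_mul_right h a).trans (sq a ▸ le_self_add)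

/-- The second path runs through the vertices `k + 1, 0, 1, …, k`. -/
theorem prod_cycle_rieszKernel_le (k : ℕ) (γ : ℝ) (x : Fin (k + 2) → ℝ) :
    ∏ i, rieszKernel γ (x i) (x (i + 1))
      ≤ ∏ j : Fin (k + 1),
          rieszKernel (if j = Fin.last k then 2 * γ else γ) (x j.castSucc) (x j.succ)
        + ∏ j : Fin (k + 1), rieszKernel (if j = 0 then 2 * γ else γ)
            (x ((finRotate _).symm j.castSucc)) (x ((finRotate _).symm j.succ)) := by
  set a : Fin (k + 2) → ℝ≥0∞ := fun i => rieszKernel γ (x i) (x (i + 1))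
  set P := ∏ j : Fin k, a j.castSucc.castSucc
  have hrot_zero : (finRotate (k + 2)).symm 0 = Fin.last _ := by
    rw [Equiv.symm_apply_eq, finRotate_last]
  have hrot_succ (i : Fin (k + 1)) : (finRotate (k + 2)).symm i.succ = i.castSucc := by
    rw [Equiv.symm_apply_eq, finRotate_apply, Fin.coeSucc_eq_succ]
  have hcycle : ∏ i, a i = P * (a (Fin.last k).castSucc * a (Fin.last (k + 1))) := by
    rw [Fin.prod_univ_castSucc, Fin.prod_univ_castSucc, mul_assoc]
  have hpath₁ : ∏ j : Fin (k + 1),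
      rieszKernel (if j = Fin.last k then 2 * γ else γ) (x j.castSucc) (x j.succ)
        = P * a (Fin.last k).castSucc ^ 2 := by
    simp [P, a, Fin.prod_univ_castSucc, rieszKernel_sq, Fin.coeSucc_eq_succ]
  have hpath₂ : ∏ j : Fin (k + 1), rieszKernel (if j = 0 then 2 * γ else γ)
      (x ((finRotate _).symm j.castSucc)) (x ((finRotate _).symm j.succ))
        = P * a (Fin.last (k + 1)) ^ 2 := by
    rw [Fin.prod_univ_succ, mul_comm]
    simp only [Fin.castSucc_zero, hrot_zero, hrot_succ, ← Fin.succ_castSucc, Fin.succ_ne_zero,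
      if_true, if_false, ← rieszKernel_sq, P, a, Fin.last_add_one, Fin.coeSucc_eq_succ]
  rw [hcycle, hpath₁, hpath₂, ← mul_add]
  exact mul_le_mul_right (ENNReal.mul_le_sq_add_sq _ _) P

theorem enorm_prod_cycle_le {m : ℕ} [NeZero m] (γ : ℝ) {x : Fin m → ℝ}
    (hx : ∀ i, x i ∈ Icc (0 : ℝ) 1) :
    ‖∏ i, |x i - x (i + 1)| ^ γ * min (x i) (x (i + 1))‖ₑ
      ≤ ∏ i, rieszKernel γ (x i) (x (i + 1)) := by
  have hmin (i : Fin m) : min (x i) (x (i + 1)) ∈ Icc (0 : ℝ) 1 :=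
    ⟨le_min (hx i).1 (hx (i + 1)).1, (min_le_left _ _).trans (hx i).2⟩
  have hfactor (i : Fin m) : 0 ≤ |x i - x (i + 1)| ^ γ * min (x i) (x (i + 1)) :=
    mul_nonneg (by positivity) (hmin i).1
  rw [Real.enorm_of_nonneg (Finset.prod_nonneg fun i _ => hfactor i),
    ENNReal.ofReal_prod_of_nonneg fun i _ => hfactor i]
  exact Finset.prod_le_prod' fun i _ => ENNReal.ofReal_le_ofReal <|
    mul_le_of_le_one_right (by positivity) (hmin i).2

/-- for `3/4 < H < 1` and `m ≥ 2`, the cyclic integral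
`∫_{[0,1]^m} ∏_{i} |x_i − x_{i+1}|^{2H−2} min(x_i, x_{i+1}) dx` is finite
(the indices being cyclic modulo `m`). -/
theorem cyclic_kernel_integrable (H : ℝ) (h1 : 3/4 < H) (h2 : H < 1)
    (m : ℕ) [NeZero m] (hm : 2 ≤ m) :
    MeasureTheory.IntegrableOn
      (fun x : Fin m → ℝ => ∏ i : Fin m, (|x i - x (i + 1)| ^ (2*H - 2) * min (x i) (x (i + 1))))
      (Set.univ.pi fun _ => Set.Icc (0:ℝ) 1) := by
  obtain ⟨k, rfl⟩ : ∃ k, m = k + 2 := ⟨m - 2, by omega⟩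
  have hexponent (P : Prop) [Decidable P] :
      (if P then 2 * (2 * H - 2) else 2 * H - 2) ∈ Ioc (-1) 0 := by
    split_ifs <;> constructor <;> linarith
  refine ⟨by fun_prop, ?_⟩
  calc ∫⁻ x in univ.pi fun _ => Icc (0 : ℝ) 1,
        ‖∏ i, |x i - x (i + 1)| ^ (2 * H - 2) * min (x i) (x (i + 1))‖ₑ
      ≤ ∫⁻ x in univ.pi fun _ => Icc (0 : ℝ) 1,
          ∏ i, rieszKernel (2 * H - 2) (x i) (x (i + 1)) :=
        setLIntegral_mono' (MeasurableSet.univ_pi fun _ => measurableSet_Icc)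
          fun x hx => enorm_prod_cycle_le _ fun i => hx i (mem_univ i)
    _ < ⊤ := by
      rw [volume_pi, Measure.restrict_pi_pi]
      refine (lintegral_mono fun x => prod_cycle_rieszKernel_le k _ x).trans_lt ?_
      rw [lintegral_add_left (measurable_prod_path fun _ => measurable_uncurry_rieszKernel _)]
      exact ENNReal.add_lt_top.2
        ⟨lintegral_prod_rieszKernel_path_lt_top (Equiv.refl _) fun _ => hexponent _,
          lintegral_prod_rieszKernel_path_lt_top _ fun _ => hexponent _⟩
end

section
/- Let u(t,x) = ∫₀ᵗ∫_ℝ G₁(t−r, x−z) W(dr,dz) with G₁(t,x) = (1/2)·1_{|x|<t} and W a space-time white noise. Then for t ≥ s ≥ 0 and x, y ∈ ℝ: E[u(t,x)u(s,y)] = s²/4 if t−s ≥ |x−y|, E[u(t,x)u(s,y)] = (t+s−|x−y|)²/16 if t−s < |x−y| < t+s, and E[u(t,x)u(s,y)] = 0 if |x−y| ≥ t+s. -/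
/-!
By the isometry, `4 E[u(t,x)u(s,y)]` integrates over `u ∈ [0, s]` the length of the overlap of the
light-cone sections `(x - (t-u), x + (t-u))` and `(y - (s-u), y + (s-u))`. Two intervals of radii
`r, ρ` centred at `p, q` overlap in length `max 0 (min (min (2r) (2ρ)) (r + ρ - |p - q|))`, which
here is `max 0 (m - 2u)` with `m = min (2s) (t + s - |x - y|)`. Integrating gives
`E[u(t,x)u(s,y)] = (max 0 m)² / 16`, and the three cases are the three regimes of `m`.
-/

open MeasureTheory intervalIntegral Set

lemma min_add_sub_max_sub_eq (p q r ρ : ℝ) :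
    min (p + r) (q + ρ) - max (p - r) (q - ρ) = min (min (2 * r) (2 * ρ)) (r + ρ - |p - q|) := by
  rcases abs_cases (p - q) with ⟨h, h'⟩ | ⟨h, h'⟩ <;> rw [h] <;>
    simp only [min_def, max_def] <;> split_ifs <;> linarith

lemma integral_ite_abs_sub_lt_mul_ite_abs_sub_lt (p q r ρ : ℝ) :
    ∫ z : ℝ, (if |p - z| < r then (1:ℝ) else 0) * (if |q - z| < ρ then (1:ℝ) else 0)
      = max 0 (min (min (2 * r) (2 * ρ)) (r + ρ - |p - q|)) := by
  have hmem (c R z : ℝ) : |c - z| < R ↔ z ∈ Ioo (c - R) (c + R) := by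
    rw [abs_sub_lt_iff, mem_Ioo]
    constructor <;> rintro ⟨h₁, h₂⟩ <;> constructor <;> linarith
  have hind : (fun z : ℝ => (if |p - z| < r then (1:ℝ) else 0) * (if |q - z| < ρ then (1:ℝ) else 0))
      = (Ioo (p - r) (p + r) ∩ Ioo (q - ρ) (q + ρ)).indicator 1 := by
    ext z
    simp only [hmem, indicator_apply, mem_inter_iff, Pi.one_apply, ite_zero_mul_ite_zero, mul_one]
  rw [hind, integral_indicator_one (measurableSet_Ioo.inter measurableSet_Ioo), Ioo_inter_Ioo,
    Real.volume_real_Ioo, max_comm, ← min_add_sub_max_sub_eq]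

lemma integral_max_zero_sub_two_mul {m s : ℝ} (hs : 0 ≤ s) (hm : m ≤ 2 * s) :
    ∫ u in (0:ℝ)..s, max 0 (m - 2 * u) = (max 0 m) ^ 2 / 4 := by
  rcases le_total m 0 with hm0 | hm0
  · have hzero : EqOn (fun u => max 0 (m - 2 * u)) 0 (uIcc 0 s) := by
      intro u hu
      rw [uIcc_of_le hs] at hu
      exact max_eq_left (by linarith [hu.1])
    simp [integral_congr hzero, max_eq_left hm0]
  · have hcont : Continuous fun u : ℝ => max 0 (m - 2 * u) := by fun_prop
    have hpos : EqOn (fun u => max 0 (m - 2 * u)) (fun u => m - 2 * u) (uIcc 0 (m / 2)) := by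
      intro u hu
      rw [uIcc_of_le (by linarith)] at hu
      exact max_eq_right (by linarith [hu.2])
    have hzero : EqOn (fun u => max 0 (m - 2 * u)) 0 (uIcc (m / 2) s) := by
      intro u hu
      rw [uIcc_of_le (by linarith)] at hu
      exact max_eq_left (by linarith [hu.1])
    rw [← integral_add_adjacent_intervals (b := m / 2) (hcont.intervalIntegrable _ _)
      (hcont.intervalIntegrable _ _), integral_congr hpos, integral_congr hzero, max_eq_right hm0,
      intervalIntegral.integral_sub intervalIntegrable_const (intervalIntegrable_id.const_mul 2),
      intervalIntegral.integral_const_mul, integral_id, intervalIntegral.integral_const]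
    simp only [sub_zero, smul_eq_mul, Pi.zero_apply, intervalIntegral.integral_zero, add_zero]
    ring

lemma integral_light_cone_overlap {t s : ℝ} (x y : ℝ) (hs : 0 ≤ s) (hst : s ≤ t) :
    ∫ u in (0:ℝ)..(min t s), ∫ z : ℝ,
        (if |x - z| < t - u then (1:ℝ) else 0) * (if |y - z| < s - u then (1:ℝ) else 0)
      = (max 0 (min (2 * s) (t + s - |x - y|))) ^ 2 / 4 := by
  have hoverlap (u : ℝ) :
      min (min (2 * (t - u)) (2 * (s - u))) (t - u + (s - u) - |x - y|)
        = min (2 * s) (t + s - |x - y|) - 2 * u := by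
    rw [min_eq_right (by linarith : 2 * (s - u) ≤ 2 * (t - u)), ← min_sub_sub_right]
    ring_nf
  simp_rw [min_eq_right hst, integral_ite_abs_sub_lt_mul_ite_abs_sub_lt, hoverlap]
  exact integral_max_zero_sub_two_mul hs (min_le_left _ _)

/-- the mild solution of the wave equation driven by space-time white noise,
whose covariance is given by the Itô isometry
`E[u(t,x)u(s,y)] = (1/4) ∫₀^{min(t,s)} ∫_ℝ 1_{|x−z|<t−u} 1_{|y−z|<s−u} dz du`,
satisfies for `t ≥ s ≥ 0`: `E[u(t,x)u(s,y)] = s²/4` if `t−s ≥ |x−y|`,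
`= (t+s−|x−y|)²/16` if `t−s < |x−y| < t+s`, and `= 0` if `|x−y| ≥ t+s`. -/
theorem white_noise_covariance (cov : ℝ → ℝ → ℝ → ℝ → ℝ)
    (hiso : ∀ t x s y : ℝ, 0 ≤ s → s ≤ t →
      cov t x s y = (1/4) * ∫ u in (0:ℝ)..(min t s), ∫ z : ℝ,
        (if |x - z| < t - u then (1:ℝ) else 0) * (if |y - z| < s - u then (1:ℝ) else 0))
    (t s x y : ℝ) (hs : 0 ≤ s) (hst : s ≤ t) :
    (|x - y| ≤ t - s → cov t x s y = s^2/4)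
    ∧ (t - s < |x - y| → |x - y| < t + s → cov t x s y = (t + s - |x - y|)^2/16)
    ∧ (t + s ≤ |x - y| → cov t x s y = 0) := by
  rw [hiso t x s y hs hst, integral_light_cone_overlap x y hs hst]
  refine ⟨fun h => ?_, fun h₁ h₂ => ?_, fun h => ?_⟩
  · rw [min_eq_left (by linarith), max_eq_right (by linarith)]
    ring
  · rw [min_eq_right (by linarith), max_eq_right (by linarith)]
    ring
  · rw [max_eq_left (min_le_of_right_le (by linarith))]
    ring
end
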